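/- arXiv:1705.03412 — 9 statements merged into one kernel-verified Lean document; each statement's English description precedes it below -/
import Mathlib

section
/- Let f : ℝ → ℝ be a continuous convex function that attains its global minimum at a unique point, let F : ℝ → ℝ be a continuous convex function, let ρ > 0 and c ∈ ℝ. Then the function x ↦ F(x) + (ρ/2)·(f(x) + c)² attains a global minimum on ℝ. -/
set_option maxHeartbeats 1000000

open Filter

private lemma key_tendsto (f F : ℝ → ℝ)
    (hf_conv : ConvexOn ℝ Set.univ f) (hF_conv : ConvexOn ℝ Set.univ F)
    (a : ℝ) (hmin : ∀ x : ℝ, x ≠ a → f a < f x)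
    (ρ c : ℝ) (hρ : 0 < ρ) :
    Tendsto (fun x => F x + ρ / 2 * (f x + c) ^ 2) atTop atTop := by
  set s : ℝ := f (a + 1) - f a with hs_def
  have hs : 0 < s := sub_pos.mpr (hmin (a + 1) (by linarith))
  set k : ℝ := F 0 - F (-1) with hk_def
  -- linear lower bound for f on [a+1, ∞)
  have hfb : ∀ x : ℝ, a + 1 ≤ x → f a + s * (x - a) ≤ f x := by
    intro x hx
    rcases eq_or_lt_of_le hx with h | h
    · rw [← h]; nlinarith [hs]
    · have hsl := hf_conv.slope_mono_adjacent (Set.mem_univ a) (Set.mem_univ x)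
        (by linarith : a < a + 1) h
      have h1 : (f (a+1) - f a) / (a + 1 - a) = s := by
        rw [hs_def]; norm_num
      rw [h1] at hsl
      have hx0 : (0:ℝ) < x - (a+1) := by linarith
      have h2 : s * (x - (a+1)) ≤ f x - f (a+1) := (le_div_iff₀ hx0).mp hsl
      nlinarith [hs]
  -- linear lower bound for F on [0, ∞)
  have hFb : ∀ x : ℝ, 0 ≤ x → F 0 + k * x ≤ F x := by
    intro x hx
    rcases eq_or_lt_of_le hx with h | h
    · rw [← h]; simp
    · have hsl := hF_conv.slope_mono_adjacent (Set.mem_univ (-1)) (Set.mem_univ x)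
        (by norm_num : (-1:ℝ) < 0) h
      have h1 : (F 0 - F (-1)) / (0 - (-1)) = k := by rw [hk_def]; norm_num
      rw [h1, sub_zero] at hsl
      have h2 : k * x ≤ F x - F 0 := (le_div_iff₀ h).mp hsl
      linarith
  set A : ℝ := f a + c - s * a with hA_def
  -- choose threshold M
  set M : ℝ := max (a + 1) (max 1 (max ((-A) / s + 1)
      ((|ρ * s * A + k - 1| + |F 0 + ρ / 2 * A ^ 2| + 1) / (ρ / 2 * s ^ 2) + 1))) with hM_def
  clear_value s k A M
  have hq : 0 < ρ / 2 * s ^ 2 := by positivity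
  apply tendsto_atTop_mono' _ _ tendsto_id
  filter_upwards [eventually_ge_atTop M] with x hx
  rw [hM_def] at hx
  have hx1 : a + 1 ≤ x := le_trans (le_max_left _ _) hx
  have hx2 : (1:ℝ) ≤ x := le_trans (le_max_of_le_right (le_max_left _ _)) hx
  have hx3 : (-A) / s + 1 ≤ x := le_trans (le_max_of_le_right (le_max_of_le_right (le_max_left _ _))) hx
  have hx4 : (|ρ * s * A + k - 1| + |F 0 + ρ / 2 * A ^ 2| + 1) / (ρ / 2 * s ^ 2) + 1 ≤ x :=
    le_trans (le_max_of_le_right (le_max_of_le_right (le_max_right _ _))) hx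
  have hf1 : f a + s * (x - a) ≤ f x := hfb x hx1
  have hF1 : F 0 + k * x ≤ F x := hFb x (by linarith)
  -- s*x + A ≥ 0
  have hsxA : 0 ≤ s * x + A := by
    have : -A / s ≤ x - 1 := by linarith
    have := (div_le_iff₀ hs).mp this
    nlinarith
  have hfxc : s * x + A ≤ f x + c := by
    have : f a + s * (x - a) + c = s * x + A := by rw [hA_def]; ring
    linarith
  have hsq : (s * x + A) ^ 2 ≤ (f x + c) ^ 2 := by nlinarith
  -- quadratic domination
  have hquad : x ≤ F 0 + k * x + ρ / 2 * (s * x + A) ^ 2 := by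
    have hB := abs_le.mp (le_refl |ρ * s * A + k - 1|)
    have hC := abs_le.mp (le_refl |F 0 + ρ / 2 * A ^ 2|)
    have hx4' : (|ρ * s * A + k - 1| + |F 0 + ρ / 2 * A ^ 2| + 1) / (ρ / 2 * s ^ 2) ≤ x - 1 := by
      linarith
    have h5 : |ρ * s * A + k - 1| + |F 0 + ρ / 2 * A ^ 2| + 1 ≤ (ρ / 2 * s ^ 2) * (x - 1) := by
      have := (div_le_iff₀ hq).mp hx4'
      linarith [this]
    have hx0 : (0:ℝ) ≤ x := by linarith
    have e1 : (|ρ * s * A + k - 1| + |F 0 + ρ / 2 * A ^ 2| + 1) * x ≤ (ρ / 2 * s ^ 2) * (x - 1) * x :=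
      mul_le_mul_of_nonneg_right h5 hx0
    have e2 : (ρ / 2 * s ^ 2) * (x - 1) * x ≤ (ρ / 2 * s ^ 2) * x ^ 2 := by nlinarith
    have e3 : |F 0 + ρ / 2 * A ^ 2| ≤ |F 0 + ρ / 2 * A ^ 2| * x :=
      le_mul_of_one_le_right (abs_nonneg _) hx2
    have e4 : -|ρ * s * A + k - 1| * x ≤ (ρ * s * A + k - 1) * x :=
      mul_le_mul_of_nonneg_right hB.1 hx0
    nlinarith [hC.1]
  have hsq' : ρ / 2 * (s * x + A) ^ 2 ≤ ρ / 2 * (f x + c) ^ 2 :=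
    mul_le_mul_of_nonneg_left hsq (by linarith)
  have : x ≤ F x + ρ / 2 * (f x + c) ^ 2 := by linarith
  simpa using this

private lemma convexOn_neg_comp (g : ℝ → ℝ) (hg : ConvexOn ℝ Set.univ g) :
    ConvexOn ℝ Set.univ (fun x => g (-x)) := by
  refine ⟨convex_univ, fun x _ y _ p q hp hq hpq => ?_⟩
  have := hg.2 (Set.mem_univ (-x)) (Set.mem_univ (-y)) hp hq hpq
  have h2 : p • (-x) + q • (-y) = -(p • x + q • y) := by
    simp only [smul_neg]; ring
  rw [h2] at this
  exact this

/-- "Unique minimum" case of the existence lemma for neADMM subproblems: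
if `f : ℝ → ℝ` is continuous, convex, and attains its global minimum at a unique point,
`F : ℝ → ℝ` is continuous and convex, `ρ > 0` and `c ∈ ℝ`, then
`x ↦ F x + (ρ/2)·(f x + c)²` attains a global minimum on `ℝ`. -/
theorem neADMM_subproblem_exists_uniqueMin
    (f F : ℝ → ℝ) (hf_cont : Continuous f)
    (hf_conv : ConvexOn ℝ Set.univ f)
    (hf_min : ∃! a : ℝ, ∀ x : ℝ, f a ≤ f x)
    (hF_cont : Continuous F) (hF_conv : ConvexOn ℝ Set.univ F)
    (ρ c : ℝ) (hρ : 0 < ρ) :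
    ∃ x₀ : ℝ, ∀ x : ℝ,
      F x₀ + ρ / 2 * (f x₀ + c) ^ 2 ≤ F x + ρ / 2 * (f x + c) ^ 2 := by
  obtain ⟨a, ha, hauniq⟩ := hf_min
  have hmin : ∀ x : ℝ, x ≠ a → f a < f x := by
    intro x hx
    refine lt_of_le_of_ne (ha x) fun h => hx (hauniq x fun y => h ▸ ha y)
  have hT : Tendsto (fun x => F x + ρ / 2 * (f x + c) ^ 2) atTop atTop :=
    key_tendsto f F hf_conv hF_conv a hmin ρ c hρ
  have hmin' : ∀ x : ℝ, x ≠ -a → f (-(-a)) < f (-x) := by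
    intro x hx
    rw [neg_neg]
    exact hmin (-x) fun h => hx (by rw [← h, neg_neg])
  have hT' : Tendsto (fun x => F (-x) + ρ / 2 * (f (-x) + c) ^ 2) atTop atTop :=
    key_tendsto (fun x => f (-x)) (fun x => F (-x)) (convexOn_neg_comp f hf_conv)
      (convexOn_neg_comp F hF_conv) (-a) hmin' ρ c hρ
  have hB : Tendsto (fun x => F x + ρ / 2 * (f x + c) ^ 2) atBot atTop := by
    have := hT'.comp tendsto_neg_atBot_atTop
    refine this.congr fun x => ?_
    simp [Function.comp]
  have hco : Tendsto (fun x => F x + ρ / 2 * (f x + c) ^ 2) (Filter.cocompact ℝ) atTop := by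
    rw [cocompact_eq_atBot_atTop, tendsto_sup]
    exact ⟨hB, hT⟩
  have hcont : Continuous fun x => F x + ρ / 2 * (f x + c) ^ 2 :=
    hF_cont.add (continuous_const.mul ((hf_cont.add continuous_const).pow 2))
  exact hcont.exists_forall_le hco
end

section
/- Let a ∈ ℝⁿ and c ∈ ℝ, and define g : ℝⁿ → ℝ by g(w) = ‖w − a‖₂² + (‖w‖₂² − 1 + c)². If w* is a local minimizer of g, then 2(w* − a) + 4(‖w*‖₂² − 1 + c)·w* = 0; consequently (2‖w*‖₂² − 1 + 2c)·w* = a, and the scalar u = ‖w*‖₂ satisfies the cubic equation |2u³ − u + 2cu| = ‖a‖₂. -/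
/-!
The derivative of `g` at `w` is `⟪2 (w - a) + 4 (‖w‖² - 1 + c) w, ·⟫`, which vanishes at a local
minimizer; since `innerSL` is an isometry, the gradient vector itself is zero. Solving it for `a`
gives `(2‖w‖² - 1 + 2c) w = a`, and taking norms of both sides gives the cubic in `u = ‖w‖`.
-/

variable {E : Type*} [NormedAddCommGroup E] [InnerProductSpace ℝ E]

theorem IsLocalMin.eq_zero_of_hasFDerivAt_innerSL {f : E → ℝ} {x v : E} (h : IsLocalMin f x)
    (hf : HasFDerivAt f (innerSL ℝ v) x) : v = 0 := by
  rw [← norm_eq_zero, ← innerSL_apply_norm ℝ, h.hasFDerivAt_eq_zero hf, norm_zero]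

theorem hasFDerivAt_norm_sub_sq (a x : E) :
    HasFDerivAt (fun y => ‖y - a‖ ^ 2) (innerSL ℝ ((2 : ℝ) • (x - a))) x := by
  refine ((hasFDerivAt_id x).sub_const a).norm_sq.congr_fderiv ?_
  ext v
  simp

theorem hasFDerivAt_norm_sq_add_sq (t : ℝ) (x : E) :
    HasFDerivAt (fun y => (‖y‖ ^ 2 + t) ^ 2) (innerSL ℝ ((4 * (‖x‖ ^ 2 + t)) • x)) x := by
  refine (((hasFDerivAt_id x).norm_sq).add_const t).pow 2 |>.congr_fderiv ?_
  ext v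
  simp only [id_eq, Nat.add_one_sub_one, pow_one, smul_add, nsmul_eq_mul, Nat.cast_ofNat,
    ContinuousLinearMap.comp_id, smul_apply, coe_innerSL_apply, smul_eq_mul,
    map_smul]
  ring

theorem smul_eq_of_two_smul_sub_add_smul_eq_zero {M : Type*} [AddCommGroup M] [Module ℝ M]
    {a w : M} {s : ℝ} (h : (2 : ℝ) • (w - a) + (4 * s) • w = 0) : (2 * s + 1) • w = a := by
  linear_combination (norm := module) (2⁻¹ : ℝ) • h

/-- Closed-form characterization of the `w`-update subproblem of neADMM for spherical
constraints: at a local minimizer `w` of `g w = ‖w − a‖² + (‖w‖² − 1 + c)²`, the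
first-order condition `2(w − a) + 4(‖w‖² − 1 + c)·w = 0` holds; consequently
`(2‖w‖² − 1 + 2c)·w = a` and `u = ‖w‖` solves the cubic `|2u³ − u + 2cu| = ‖a‖`. -/
theorem neADMM_sphere_w_update {n : ℕ} (a : EuclideanSpace ℝ (Fin n)) (c : ℝ)
    (g : EuclideanSpace ℝ (Fin n) → ℝ)
    (hg : ∀ w : EuclideanSpace ℝ (Fin n), g w = ‖w - a‖ ^ 2 + (‖w‖ ^ 2 - 1 + c) ^ 2)
    (w : EuclideanSpace ℝ (Fin n)) (hw : IsLocalMin g w) :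
    (2 : ℝ) • (w - a) + (4 * (‖w‖ ^ 2 - 1 + c)) • w = 0 ∧
    (2 * ‖w‖ ^ 2 - 1 + 2 * c) • w = a ∧
    |2 * ‖w‖ ^ 3 - ‖w‖ + 2 * c * ‖w‖| = ‖a‖ := by
  have hshift (y : EuclideanSpace ℝ (Fin n)) : ‖y‖ ^ 2 - 1 + c = ‖y‖ ^ 2 + (c - 1) := by ring
  have hgrad : HasFDerivAt g
      (innerSL ℝ ((2 : ℝ) • (w - a) + (4 * (‖w‖ ^ 2 - 1 + c)) • w)) w := by
    simp only [funext hg, hshift, map_add]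
    exact (hasFDerivAt_norm_sub_sq a w).add (hasFDerivAt_norm_sq_add_sq (c - 1) w)
  have hcrit := hw.eq_zero_of_hasFDerivAt_innerSL hgrad
  have hsol : (2 * ‖w‖ ^ 2 - 1 + 2 * c) • w = a := by
    convert smul_eq_of_two_smul_sub_add_smul_eq_zero hcrit using 2
    ring
  refine ⟨hcrit, hsol, ?_⟩
  calc |2 * ‖w‖ ^ 3 - ‖w‖ + 2 * c * ‖w‖| = |(2 * ‖w‖ ^ 2 - 1 + 2 * c) * ‖w‖| := by ring_nf
    _ = ‖(2 * ‖w‖ ^ 2 - 1 + 2 * c) • w‖ := by rw [norm_smul, Real.norm_eq_abs, abs_mul, abs_norm]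
    _ = ‖a‖ := by rw [hsol]
end

section
/- Let d ≥ 1 and ρ > 0. Let O_d, I_d ∈ ℝ^{d×d} be the zero and identity matrices; let A ∈ ℝ^{2d×2d} be the block matrix with blocks [[O_d, O_d],[O_d, I_d]] and B = [O_d, I_d] ∈ ℝ^{d×2d}. Define the 3d×3d block matrices C = [[ρA, 0],[B, (1/ρ)I_d]], D = [[ρA, 0],[0, (1/ρ)I_d]], E = [[I_{2d}, 0],[ρB, I_d]] and G = C + Cᵀ − EᵀDE. Then C = D·E, BᵀB = A, and G = (1/ρ)·[[O_d, 0],[0, A]]; in particular G is symmetric positive semidefinite. -/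
open Matrix

/-!
Write `P = [0, I]` for the embedding-by-columns matrix, so that `B = P` and `A = Pᵀ P`, and more
generally `Pᵀ X P = [[0, 0], [0, X]]`. Hence `C = DE` is a direct block multiplication, and since
`Eᵀ D E = Eᵀ C`, one finds `G = [[ρ (Aᵀ - Bᵀ B), 0], [0, ρ⁻¹ I]]`, whose upper-left block vanishes
because `A = Bᵀ B` is symmetric. Then `G = Pᵀ (ρ⁻¹ I) P` is positive semidefinite.
-/

namespace Matrix

variable {R l m n : Type*}

theorem fromRows_zero_one_mul_mul_fromCols_zero_one [Semiring R] [Fintype n] [DecidableEq n]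
    (X : Matrix n n R) :
    fromRows (0 : Matrix m n R) 1 * X * fromCols (0 : Matrix n m R) 1 = fromBlocks 0 0 0 X := by
  rw [fromRows_mul, fromRows_mul_fromCols]
  simp

theorem transpose_fromCols_zero_one_mul_self [Semiring R] [Fintype n] [DecidableEq n] :
    (fromCols (0 : Matrix n m R) (1 : Matrix n n R))ᵀ * fromCols (0 : Matrix n m R) 1 =
      fromBlocks 0 0 0 (1 : Matrix n n R) := by
  rw [transpose_fromCols, transpose_zero, transpose_one,
    ← fromRows_zero_one_mul_mul_fromCols_zero_one, Matrix.mul_one]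

theorem PosSemidef.fromBlocks_zero_zero_zero [CommRing R] [PartialOrder R] [StarRing R]
    [Fintype m] [Fintype n] [DecidableEq n] {X : Matrix n n R} (hX : X.PosSemidef) :
    (fromBlocks (0 : Matrix m m R) 0 0 X).PosSemidef := by
  have h := hX.conjTranspose_mul_mul_same (fromCols (0 : Matrix n m R) (1 : Matrix n n R))
  rwa [conjTranspose_fromCols_eq_fromRows_conjTranspose, conjTranspose_zero, conjTranspose_one,
    fromRows_zero_one_mul_mul_fromCols_zero_one] at h

theorem reindex_sumAssoc_fromBlocks_zero_zero_zero [Zero R] (X : Matrix n n R) :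
    reindex (Equiv.sumAssoc l m n) (Equiv.sumAssoc l m n) (fromBlocks 0 0 0 X) =
      fromBlocks 0 0 0 (fromBlocks 0 0 0 X) := by
  ext (i | i | i) (j | j | j) <;> rfl

end Matrix

namespace NeADMM

variable {K m n : Type*} [Field K] [Fintype m] [Fintype n] [DecidableEq m] [DecidableEq n]

-- The matrices `C`, `D` and `E` of the variational inequality reformulation.
def predictionMatrix (ρ : K) (A : Matrix m m K) (B : Matrix n m K) : Matrix (m ⊕ n) (m ⊕ n) K :=
  fromBlocks (ρ • A) 0 B (ρ⁻¹ • 1)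

def metricMatrix (ρ : K) (A : Matrix m m K) : Matrix (m ⊕ n) (m ⊕ n) K :=
  fromBlocks (ρ • A) 0 0 (ρ⁻¹ • 1)

def correctionMatrix (ρ : K) (B : Matrix n m K) : Matrix (m ⊕ n) (m ⊕ n) K :=
  fromBlocks 1 0 (ρ • B) 1

theorem predictionMatrix_eq_metricMatrix_mul_correctionMatrix {ρ : K} (hρ : ρ ≠ 0)
    (A : Matrix m m K) (B : Matrix n m K) :
    predictionMatrix ρ A B = metricMatrix ρ A * correctionMatrix ρ B := by
  rw [predictionMatrix, metricMatrix, correctionMatrix, fromBlocks_multiply]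
  simp [smul_smul, mul_inv_cancel₀ hρ]

theorem predictionMatrix_add_transpose_sub_eq_fromBlocks {ρ : K} (hρ : ρ ≠ 0) (A : Matrix m m K)
    (B : Matrix n m K) :
    predictionMatrix ρ A B + (predictionMatrix ρ A B)ᵀ -
        (correctionMatrix ρ B)ᵀ * metricMatrix ρ A * correctionMatrix ρ B =
      fromBlocks (ρ • (Aᵀ - Bᵀ * B)) 0 0 (ρ⁻¹ • 1) := by
  rw [Matrix.mul_assoc, ← predictionMatrix_eq_metricMatrix_mul_correctionMatrix hρ,
    predictionMatrix, correctionMatrix, fromBlocks_transpose, fromBlocks_transpose,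
    fromBlocks_multiply, fromBlocks_add, sub_eq_add_neg, fromBlocks_neg, fromBlocks_add]
  congr 1
  · simp only [transpose_smul, transpose_one, Matrix.one_mul, smul_mul, smul_sub]
    abel
  · simp [smul_smul, inv_mul_cancel₀ hρ]
  · simp
  · simp

end NeADMM

theorem neADMM_VI_matrices_general (d : ℕ) (ρ : ℝ) (hρ : 0 < ρ)
    (A : Matrix (Fin d ⊕ Fin d) (Fin d ⊕ Fin d) ℝ)
    (hA : A = Matrix.fromBlocks 0 0 0 1)
    (B : Matrix (Fin d) (Fin d ⊕ Fin d) ℝ)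
    (hB : B = Matrix.fromCols 0 1)
    (C D E G : Matrix ((Fin d ⊕ Fin d) ⊕ Fin d) ((Fin d ⊕ Fin d) ⊕ Fin d) ℝ)
    (hC : C = Matrix.fromBlocks (ρ • A) 0 B ((1 / ρ) • 1))
    (hD : D = Matrix.fromBlocks (ρ • A) 0 0 ((1 / ρ) • 1))
    (hE : E = Matrix.fromBlocks 1 0 (ρ • B) 1)
    (hG : G = C + Cᵀ - Eᵀ * D * E) :
    C = D * E ∧ Bᵀ * B = A ∧
    Matrix.reindex (Equiv.sumAssoc (Fin d) (Fin d) (Fin d))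
        (Equiv.sumAssoc (Fin d) (Fin d) (Fin d)) G =
      (1 / ρ) • Matrix.fromBlocks (0 : Matrix (Fin d) (Fin d) ℝ) 0 0 A ∧
    G.IsSymm ∧ G.PosSemidef := by
  rw [one_div] at hC hD ⊢
  obtain rfl : C = NeADMM.predictionMatrix ρ A B := hC
  obtain rfl : D = NeADMM.metricMatrix ρ A := hD
  obtain rfl : E = NeADMM.correctionMatrix ρ B := hE
  have hBB : Bᵀ * B = A := hA ▸ hB ▸ transpose_fromCols_zero_one_mul_self
  have hG_blocks : G = fromBlocks 0 0 0 (ρ⁻¹ • 1) := by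
    rw [hG, NeADMM.predictionMatrix_add_transpose_sub_eq_fromBlocks hρ.ne', ← hBB, transpose_mul,
      transpose_transpose, sub_self, smul_zero]
  have hG_psd : G.PosSemidef :=
    hG_blocks ▸ (PosSemidef.one.smul (inv_nonneg.2 hρ.le)).fromBlocks_zero_zero_zero
  refine ⟨NeADMM.predictionMatrix_eq_metricMatrix_mul_correctionMatrix hρ.ne' A B, hBB, ?_,
    isHermitian_iff_isSymm.1 hG_psd.isHermitian, hG_psd⟩
  rw [hG_blocks, reindex_sumAssoc_fromBlocks_zero_zero_zero, hA]
  simp only [fromBlocks_smul, smul_zero]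

/-- Structural matrices of the variational inequality reformulation of neADMM:
with `A = [[0,0],[0,I_d]]`, `B = [0, I_d]`,
`C = [[ρA, 0],[B, (1/ρ)I_d]]`, `D = [[ρA, 0],[0, (1/ρ)I_d]]`, `E = [[I_{2d}, 0],[ρB, I_d]]`
and `G = C + Cᵀ − EᵀDE`, one has `C = D·E`, `BᵀB = A`, and
`G = (1/ρ)·[[O_d, 0],[0, A]]` (expressed by regrouping the `3d` coordinates via
`Equiv.sumAssoc`); in particular `G` is symmetric positive semidefinite. -/
theorem neADMM_VI_matrices (d : ℕ) (hd : 1 ≤ d) (ρ : ℝ) (hρ : 0 < ρ)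
    (A : Matrix (Fin d ⊕ Fin d) (Fin d ⊕ Fin d) ℝ)
    (hA : A = Matrix.fromBlocks 0 0 0 1)
    (B : Matrix (Fin d) (Fin d ⊕ Fin d) ℝ)
    (hB : B = Matrix.fromCols 0 1)
    (C D E G : Matrix ((Fin d ⊕ Fin d) ⊕ Fin d) ((Fin d ⊕ Fin d) ⊕ Fin d) ℝ)
    (hC : C = Matrix.fromBlocks (ρ • A) 0 B ((1 / ρ) • 1))
    (hD : D = Matrix.fromBlocks (ρ • A) 0 0 ((1 / ρ) • 1))
    (hE : E = Matrix.fromBlocks 1 0 (ρ • B) 1)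
    (hG : G = C + Cᵀ - Eᵀ * D * E) :
    C = D * E ∧ Bᵀ * B = A ∧
    Matrix.reindex (Equiv.sumAssoc (Fin d) (Fin d) (Fin d))
        (Equiv.sumAssoc (Fin d) (Fin d) (Fin d)) G =
      (1 / ρ) • Matrix.fromBlocks (0 : Matrix (Fin d) (Fin d) ℝ) 0 0 A ∧
    G.IsSymm ∧ G.PosSemidef :=
  neADMM_VI_matrices_general d ρ hρ A hA B hB C D E G hC hD hE hG
end

section
/- Let D ∈ ℝ^{n×n} be symmetric, let E ∈ ℝ^{n×n}, and set C = D·E and G = C + Cᵀ − EᵀDE. For any w, wᵏ, w̃ ∈ ℝⁿ, setting w⁺ = wᵏ − E(wᵏ − w̃), one has the identity (w − w̃)ᵀ D E (wᵏ − w̃) = (1/2)·( (w − w⁺)ᵀD(w − w⁺) − (w − wᵏ)ᵀD(w − wᵏ) + (wᵏ − w̃)ᵀG(wᵏ − w̃) ). -/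
open Matrix

lemma dot_symm_swap {n : ℕ} (D : Matrix (Fin n) (Fin n) ℝ) (hD : D.IsSymm)
    (x y : Fin n → ℝ) : x ⬝ᵥ (D *ᵥ y) = y ⬝ᵥ (D *ᵥ x) := by
  rw [Matrix.dotProduct_mulVec, ← Matrix.mulVec_transpose, hD.eq, dotProduct_comm]

/-- Per-iteration identity of the variational inequality analysis of neADMM: for a
symmetric matrix `D`, any `E`, `C = D·E`, `G = C + Cᵀ − EᵀDE`, and the corrector step
`w⁺ = wᵏ − E(wᵏ − w̃)`, one has
`(w − w̃)ᵀDE(wᵏ − w̃) = ½(‖w − w⁺‖_D² − ‖w − wᵏ‖_D² + ‖wᵏ − w̃‖_G²)`. -/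
theorem neADMM_VI_identity {n : ℕ} (D E : Matrix (Fin n) (Fin n) ℝ) (hD : D.IsSymm)
    (C G : Matrix (Fin n) (Fin n) ℝ) (hC : C = D * E) (hG : G = C + Cᵀ - Eᵀ * D * E)
    (w wk wt : Fin n → ℝ) (wp : Fin n → ℝ) (hwp : wp = wk - E *ᵥ (wk - wt)) :
    (w - wt) ⬝ᵥ ((D * E) *ᵥ (wk - wt)) =
      (1 / 2) * ((w - wp) ⬝ᵥ (D *ᵥ (w - wp)) - (w - wk) ⬝ᵥ (D *ᵥ (w - wk))
        + (wk - wt) ⬝ᵥ (G *ᵥ (wk - wt))) := by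
  subst hC hG hwp
  set a := w - wk with ha
  set u := wk - wt with hu
  set v := E *ᵥ u with hv
  have h1 : w - wt = a + u := by simp [ha, hu]
  have h2 : w - (wk - v) = a + v := by simp [ha]; abel
  rw [h1, h2]
  simp only [Matrix.transpose_mul, Matrix.add_mulVec, Matrix.sub_mulVec,
    ← Matrix.mulVec_mulVec, Matrix.mulVec_add, dotProduct_add, add_dotProduct,
    dotProduct_sub, ← hv]
  have hs1 : a ⬝ᵥ (D *ᵥ v) = v ⬝ᵥ (D *ᵥ a) := dot_symm_swap D hD a v
  have hs2 : u ⬝ᵥ (Eᵀ *ᵥ (D *ᵥ v)) = v ⬝ᵥ (D *ᵥ v) := by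
    rw [Matrix.dotProduct_mulVec, ← Matrix.mulVec_transpose, Matrix.transpose_transpose, ← hv]
  have hs3 : u ⬝ᵥ (Eᵀ *ᵥ (Dᵀ *ᵥ u)) = v ⬝ᵥ (D *ᵥ u) := by
    rw [hD.eq, Matrix.dotProduct_mulVec, ← Matrix.mulVec_transpose,
      Matrix.transpose_transpose, ← hv]
  have hs4 : u ⬝ᵥ (D *ᵥ v) = v ⬝ᵥ (D *ᵥ u) := dot_symm_swap D hD u v
  rw [hs1, hs2, hs3, hs4]
  ring
end

section
/- Let D ∈ ℝ^{n×n} be symmetric, let E ∈ ℝ^{n×n}, and set C = D·E and G = C + Cᵀ − EᵀDE. Suppose G is positive semidefinite. For any w, wᵏ, w̃ ∈ ℝⁿ, setting w⁺ = wᵏ − E(wᵏ − w̃), one has (w − w̃)ᵀ D E (wᵏ − w̃) ≥ (1/2)·( (w − w⁺)ᵀD(w − w⁺) − (w − wᵏ)ᵀD(w − wᵏ) ). -/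
open Matrix

/-!
Put `u = wᵏ − w̃` and `a = w − wᵏ`, so that `w − w̃ = a + u` and `w − w⁺ = a + E u`. Expanding
both `D`-quadratic forms, the gap between twice the left-hand side and the difference of
`D`-seminorms is exactly `uᵀ(C + Cᵀ − EᵀDE)u = uᵀGu ≥ 0`.
-/

namespace Matrix

variable {m R : Type*} [Fintype m] [CommRing R]

theorem IsSymm.dotProduct_mulVec_comm {D : Matrix m m R} (hD : D.IsSymm) (x y : m → R) :
    x ⬝ᵥ (D *ᵥ y) = y ⬝ᵥ (D *ᵥ x) := by
  rw [← dotProduct_transpose_mulVec D x y, hD.eq]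

theorem IsSymm.dotProduct_mulVec_add_self {D : Matrix m m R} (hD : D.IsSymm) (x y : m → R) :
    (x + y) ⬝ᵥ (D *ᵥ (x + y)) = x ⬝ᵥ (D *ᵥ x) + 2 * (x ⬝ᵥ (D *ᵥ y)) + y ⬝ᵥ (D *ᵥ y) := by
  simp only [mulVec_add, dotProduct_add, add_dotProduct]
  rw [hD.dotProduct_mulVec_comm y x]
  ring

theorem dotProduct_add_transpose_mulVec_self (M : Matrix m m R) (u : m → R) :
    u ⬝ᵥ ((M + Mᵀ) *ᵥ u) = 2 * (u ⬝ᵥ (M *ᵥ u)) := by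
  rw [add_mulVec, dotProduct_add, dotProduct_transpose_mulVec]
  ring

theorem dotProduct_transpose_mul_mul_mulVec_self (D E : Matrix m m R) (u : m → R) :
    u ⬝ᵥ ((Eᵀ * D * E) *ᵥ u) = (E *ᵥ u) ⬝ᵥ (D *ᵥ (E *ᵥ u)) := by
  rw [← mulVec_mulVec, ← mulVec_mulVec, dotProduct_transpose_mulVec, dotProduct_comm]

theorem IsSymm.dotProduct_corrector_mulVec_self {D : Matrix m m R} (hD : D.IsSymm)
    (E : Matrix m m R) (a u : m → R) :
    u ⬝ᵥ ((D * E + (D * E)ᵀ - Eᵀ * D * E) *ᵥ u) =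
      2 * ((a + u) ⬝ᵥ ((D * E) *ᵥ u)) -
        ((a + E *ᵥ u) ⬝ᵥ (D *ᵥ (a + E *ᵥ u)) - a ⬝ᵥ (D *ᵥ a)) := by
  rw [sub_mulVec, dotProduct_sub, dotProduct_add_transpose_mulVec_self,
    dotProduct_transpose_mul_mul_mulVec_self, hD.dotProduct_mulVec_add_self, add_dotProduct,
    ← mulVec_mulVec]
  ring

end Matrix

/-- Corollary of the per-iteration identity in the VI analysis of neADMM: for symmetric
`D`, `C = D·E`, `G = C + Cᵀ − EᵀDE` positive semidefinite, and the corrector step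
`w⁺ = wᵏ − E(wᵏ − w̃)`,
`(w − w̃)ᵀDE(wᵏ − w̃) ≥ ½(‖w − w⁺‖_D² − ‖w − wᵏ‖_D²)`. -/
theorem neADMM_VI_inequality {n : ℕ} (D E : Matrix (Fin n) (Fin n) ℝ) (hD : D.IsSymm)
    (C G : Matrix (Fin n) (Fin n) ℝ) (hC : C = D * E) (hG : G = C + Cᵀ - Eᵀ * D * E)
    (hGpsd : G.PosSemidef)
    (w wk wt : Fin n → ℝ) (wp : Fin n → ℝ) (hwp : wp = wk - E *ᵥ (wk - wt)) :
    (1 / 2) * ((w - wp) ⬝ᵥ (D *ᵥ (w - wp)) - (w - wk) ⬝ᵥ (D *ᵥ (w - wk))) ≤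
      (w - wt) ⬝ᵥ ((D * E) *ᵥ (wk - wt)) := by
  subst hC hG hwp
  have hG_nonneg := hGpsd.dotProduct_mulVec_nonneg (wk - wt)
  rw [star_trivial, hD.dotProduct_corrector_mulVec_self E (w - wk)] at hG_nonneg
  have hwt : w - wt = (w - wk) + (wk - wt) := by abel
  have hwp : w - (wk - E *ᵥ (wk - wt)) = (w - wk) + E *ᵥ (wk - wt) := by abel
  rw [hwt, hwp]
  linarith
end

section
/- Let Ω ⊆ ℝⁿ, let D ∈ ℝ^{n×n} be symmetric positive semidefinite, let H : ℝⁿ → ℝ be convex, let J : ℝⁿ → ℝⁿ, and let t ≥ 0 be an integer. Let w⁰, w¹, …, w^{t+1} ∈ ℝⁿ and w̃⁰, …, w̃ᵗ ∈ Ω be such that for every k ∈ {0, …, t} and every w ∈ Ω: H(w) − H(w̃ᵏ) + ⟨w − w̃ᵏ, J(w)⟩ ≥ (1/2)·( (w − w^{k+1})ᵀD(w − w^{k+1}) − (w − wᵏ)ᵀD(w − wᵏ) ). Define w̃_t = (1/(t+1))·∑_{k=0}^{t} w̃ᵏ. Then for every w ∈ Ω: H(w̃_t) − H(w) + ⟨w̃_t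 − w, J(w)⟩ ≤ (1/(2(t+1)))·(w − w⁰)ᵀD(w − w⁰). -/
/-!
Summing the per-iteration inequality over `k ≤ t` telescopes the `D`-terms down to
`-½‖v - w⁰‖²_D`, because `‖v - w^{t+1}‖²_D ≥ 0`. The gap `u ↦ H u - H v + ⟨u - v, J v⟩` is
convex, so by Jensen its value at the ergodic average is at most the average of its values at
the `w̃ᵏ`, which is minus the averaged left-hand sides.
-/

open Matrix Finset

/-- `u` solves the variational inequality to accuracy `ε` on `Ω` when `viGap H J w u ≤ ε`
for all `w ∈ Ω`. -/
def viGap {n : ℕ} (H : (Fin n → ℝ) → ℝ) (J : (Fin n → ℝ) → (Fin n → ℝ)) (w u : Fin n → ℝ) : ℝ :=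
  H u - H w + (u - w) ⬝ᵥ J w

lemma viGap_eq_neg {n : ℕ} (H : (Fin n → ℝ) → ℝ) (J : (Fin n → ℝ) → (Fin n → ℝ))
    (w u : Fin n → ℝ) : viGap H J w u = -(H w - H u + (w - u) ⬝ᵥ J w) := by
  rw [viGap, ← neg_sub w u, neg_dotProduct]
  ring

lemma convexOn_viGap {n : ℕ} {H : (Fin n → ℝ) → ℝ} (hH : ConvexOn ℝ Set.univ H)
    (J : (Fin n → ℝ) → (Fin n → ℝ)) (w : Fin n → ℝ) : ConvexOn ℝ Set.univ (viGap H J w) := by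
  have hlin : ConvexOn ℝ Set.univ fun u : Fin n → ℝ => u ⬝ᵥ J w :=
    (dotProductBilin ℝ ℝ |>.flip (J w)).convexOn convex_univ
  have hsplit : viGap H J w = fun u => H u + u ⬝ᵥ J w + (-H w - w ⬝ᵥ J w) := by
    funext u
    simp only [viGap, sub_dotProduct]
    ring
  exact hsplit ▸ (hH.add hlin).add_const _

lemma ConvexOn.map_average_le_average {E : Type*} [AddCommGroup E] [Module ℝ E] {f : E → ℝ}
    (hf : ConvexOn ℝ Set.univ f) {ι : Type*} {s : Finset ι} (hs : s.Nonempty) (x : ι → E) :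
    f ((#s : ℝ)⁻¹ • ∑ i ∈ s, x i) ≤ (#s : ℝ)⁻¹ * ∑ i ∈ s, f (x i) := by
  have hcard : (0 : ℝ) < #s := by exact_mod_cast hs.card_pos
  rw [smul_sum, mul_sum]
  refine hf.map_sum_le (fun _ _ => by positivity) ?_ (fun _ _ => trivial)
  rw [sum_const, nsmul_eq_mul, mul_inv_cancel₀ hcard.ne']

lemma neg_le_sum_of_sub_le {a g : ℕ → ℝ} {m : ℕ} (h : ∀ k < m, a (k + 1) - a k ≤ g k)
    (ha : 0 ≤ a m) : -a 0 ≤ ∑ k ∈ range m, g k := by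
  have htel := sum_le_sum fun k hk => h k (mem_range.mp hk)
  rw [sum_range_sub] at htel
  linarith

theorem neADMM_ergodic_rate_general {n : ℕ} (Ω : Set (Fin n → ℝ))
    (D : Matrix (Fin n) (Fin n) ℝ) (hD : D.PosSemidef)
    (H : (Fin n → ℝ) → ℝ) (hH : ConvexOn ℝ Set.univ H)
    (J : (Fin n → ℝ) → (Fin n → ℝ)) (t : ℕ)
    (w wt : ℕ → (Fin n → ℝ))
    (hiter : ∀ k ≤ t, ∀ v ∈ Ω,
      (1 / 2) * ((v - w (k + 1)) ⬝ᵥ (D *ᵥ (v - w (k + 1))) -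
          (v - w k) ⬝ᵥ (D *ᵥ (v - w k))) ≤
        H v - H (wt k) + (v - wt k) ⬝ᵥ J v)
    (wavg : Fin n → ℝ)
    (hwavg : wavg = (1 / ((t : ℝ) + 1)) • ∑ k ∈ Finset.range (t + 1), wt k) :
    ∀ v ∈ Ω, H wavg - H v + (wavg - v) ⬝ᵥ J v ≤
      (1 / (2 * ((t : ℝ) + 1))) * ((v - w 0) ⬝ᵥ (D *ᵥ (v - w 0))) := by
  intro v hv
  have hsum : -((1 / 2) * ((v - w 0) ⬝ᵥ (D *ᵥ (v - w 0)))) ≤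
      ∑ k ∈ range (t + 1), (H v - H (wt k) + (v - wt k) ⬝ᵥ J v) :=
    neg_le_sum_of_sub_le (a := fun k => (1 / 2) * ((v - w k) ⬝ᵥ (D *ᵥ (v - w k))))
      (fun k hk => by rw [← mul_sub]; exact hiter k (by omega) v hv)
      (mul_nonneg (by norm_num) (hD.dotProduct_mulVec_nonneg _))
  have hjensen :=
    (convexOn_viGap hH J v).map_average_le_average (nonempty_range_add_one (n := t)) wt
  rw [card_range, Nat.cast_add_one, ← one_div, ← hwavg] at hjensen
  calc H wavg - H v + (wavg - v) ⬝ᵥ J v = viGap H J v wavg := rfl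
    _ ≤ 1 / ((t : ℝ) + 1) * ∑ k ∈ range (t + 1), viGap H J v (wt k) := hjensen
    _ = 1 / ((t : ℝ) + 1) * -∑ k ∈ range (t + 1), (H v - H (wt k) + (v - wt k) ⬝ᵥ J v) := by
      simp only [viGap_eq_neg, sum_neg_distrib]
    _ ≤ _ := by
      rw [one_div_mul_eq_div, div_le_iff₀ (by positivity)]
      field_simp
      linarith

/-- Ergodic O(1/t) convergence rate of neADMM in the variational inequality framework:
if each predictor iterate `w̃ᵏ ∈ Ω` satisfies the per-iteration inequality against the
corrector iterates `wᵏ`, then the ergodic average `w̃_t = (1/(t+1))∑_{k=0}^t w̃ᵏ`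
satisfies `H(w̃_t) − H(w) + ⟨w̃_t − w, J w⟩ ≤ ‖w − w⁰‖_D²/(2(t+1))` for all `w ∈ Ω`. -/
theorem neADMM_ergodic_rate {n : ℕ} (Ω : Set (Fin n → ℝ))
    (D : Matrix (Fin n) (Fin n) ℝ) (hD : D.PosSemidef)
    (H : (Fin n → ℝ) → ℝ) (hH : ConvexOn ℝ Set.univ H)
    (J : (Fin n → ℝ) → (Fin n → ℝ)) (t : ℕ)
    (w wt : ℕ → (Fin n → ℝ))
    (hmem : ∀ k ≤ t, wt k ∈ Ω)
    (hiter : ∀ k ≤ t, ∀ v ∈ Ω,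
      (1 / 2) * ((v - w (k + 1)) ⬝ᵥ (D *ᵥ (v - w (k + 1))) -
          (v - w k) ⬝ᵥ (D *ᵥ (v - w k))) ≤
        H v - H (wt k) + (v - wt k) ⬝ᵥ J v)
    (wavg : Fin n → ℝ)
    (hwavg : wavg = (1 / ((t : ℝ) + 1)) • ∑ k ∈ Finset.range (t + 1), wt k) :
    ∀ v ∈ Ω, H wavg - H v + (wavg - v) ⬝ᵥ J v ≤
      (1 / (2 * ((t : ℝ) + 1))) * ((v - w 0) ⬝ᵥ (D *ᵥ (v - w 0))) :=
  neADMM_ergodic_rate_general Ω D hD H hH J t w wt hiter wavg hwavg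
end

section
/- Let D ∈ ℝ^{n×n} be symmetric, E ∈ ℝ^{n×n}, C = D·E, and G = C + Cᵀ − EᵀDE. Suppose G is positive semidefinite and a, b ∈ ℝⁿ satisfy aᵀEᵀDE(a − b) ≥ (1/2)·(a − b)ᵀ(Cᵀ + C)(a − b). Then (Ea)ᵀD(Ea) − (Eb)ᵀD(Eb) ≥ (a − b)ᵀG(a − b) ≥ 0; in particular (Eb)ᵀD(Eb) ≤ (Ea)ᵀD(Ea). -/
/-!
With `M = EᵀDE`, symmetry of `D` gives the polarization identity
`‖Ea‖_D² − ‖Eb‖_D² = 2 aᵀM(a − b) − (a − b)ᵀM(a − b)`. Bounding `2 aᵀM(a − b)` below by the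
hypothesis turns the right-hand side into `(a − b)ᵀ(C + Cᵀ − M)(a − b) = (a − b)ᵀG(a − b)`,
which is nonnegative since `G` is positive semidefinite.
-/

open Matrix

namespace Matrix

variable {m n R : Type*}

theorem IsSymm.transpose_mul_mul [Fintype m] [CommSemiring R] {D : Matrix m m R} (hD : D.IsSymm)
    (E : Matrix m n R) : (Eᵀ * D * E).IsSymm := by
  rw [IsSymm, transpose_mul, transpose_mul, transpose_transpose, hD.eq, Matrix.mul_assoc]

theorem IsSymm.dotProduct_mulVec_comm_s15 [Fintype n] [CommSemiring R] {M : Matrix n n R}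
    (hM : M.IsSymm) (v w : n → R) : v ⬝ᵥ (M *ᵥ w) = w ⬝ᵥ (M *ᵥ v) := by
  rw [dotProduct_mulVec, ← mulVec_transpose, hM.eq, dotProduct_comm]

theorem dotProduct_mulVec_mulVec_eq_transpose_mul_mul [Fintype m] [Fintype n] [CommSemiring R]
    (D : Matrix m m R) (E : Matrix m n R) (v w : n → R) :
    (E *ᵥ v) ⬝ᵥ (D *ᵥ (E *ᵥ w)) = v ⬝ᵥ ((Eᵀ * D * E) *ᵥ w) := by
  rw [← mulVec_mulVec, ← mulVec_mulVec, dotProduct_mulVec v, vecMul_transpose]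

theorem IsSymm.dotProduct_mulVec_self_sub [Fintype n] [CommRing R] {M : Matrix n n R}
    (hM : M.IsSymm) (a b : n → R) :
    a ⬝ᵥ (M *ᵥ a) - b ⬝ᵥ (M *ᵥ b) = 2 * a ⬝ᵥ (M *ᵥ (a - b)) - (a - b) ⬝ᵥ (M *ᵥ (a - b)) := by
  have hba := hM.dotProduct_mulVec_comm_s15 b a
  simp only [mulVec_sub, dotProduct_sub, sub_dotProduct, hba]
  ring

end Matrix

theorem neADMM_nonergodic_monotone_general {n : ℕ}
    (D E : Matrix (Fin n) (Fin n) ℝ) (hD : D.IsSymm)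
    (C G : Matrix (Fin n) (Fin n) ℝ) (hG : G = C + Cᵀ - Eᵀ * D * E)
    (hGpsd : G.PosSemidef) (a b : Fin n → ℝ)
    (hkey : (1 / 2) * ((a - b) ⬝ᵥ ((Cᵀ + C) *ᵥ (a - b))) ≤
      a ⬝ᵥ ((Eᵀ * D * E) *ᵥ (a - b))) :
    (a - b) ⬝ᵥ (G *ᵥ (a - b)) ≤
        (E *ᵥ a) ⬝ᵥ (D *ᵥ (E *ᵥ a)) - (E *ᵥ b) ⬝ᵥ (D *ᵥ (E *ᵥ b)) ∧
    0 ≤ (a - b) ⬝ᵥ (G *ᵥ (a - b)) ∧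
    (E *ᵥ b) ⬝ᵥ (D *ᵥ (E *ᵥ b)) ≤ (E *ᵥ a) ⬝ᵥ (D *ᵥ (E *ᵥ a)) := by
  have hdiff : (E *ᵥ a) ⬝ᵥ (D *ᵥ (E *ᵥ a)) - (E *ᵥ b) ⬝ᵥ (D *ᵥ (E *ᵥ b)) =
      2 * a ⬝ᵥ ((Eᵀ * D * E) *ᵥ (a - b)) - (a - b) ⬝ᵥ ((Eᵀ * D * E) *ᵥ (a - b)) := by
    simp only [dotProduct_mulVec_mulVec_eq_transpose_mul_mul]
    exact (hD.transpose_mul_mul E).dotProduct_mulVec_self_sub a b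
  have hGform : (a - b) ⬝ᵥ (G *ᵥ (a - b)) =
      (a - b) ⬝ᵥ ((Cᵀ + C) *ᵥ (a - b)) - (a - b) ⬝ᵥ ((Eᵀ * D * E) *ᵥ (a - b)) := by
    rw [hG, sub_mulVec, dotProduct_sub, add_comm C Cᵀ]
  have hGnonneg : 0 ≤ (a - b) ⬝ᵥ (G *ᵥ (a - b)) := hGpsd.dotProduct_mulVec_nonneg (a - b)
  have hbound : (a - b) ⬝ᵥ (G *ᵥ (a - b)) ≤
      (E *ᵥ a) ⬝ᵥ (D *ᵥ (E *ᵥ a)) - (E *ᵥ b) ⬝ᵥ (D *ᵥ (E *ᵥ b)) := by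
    rw [hGform, hdiff]
    linarith
  exact ⟨hbound, hGnonneg, by linarith⟩

/-- Monotone nonincreasing property of `‖E(wᵏ − w̃ᵏ)‖_D²` in the nonergodic rate
analysis of neADMM: for symmetric `D`, `C = D·E`, `G = C + Cᵀ − EᵀDE` positive
semidefinite, and `a, b` with `aᵀEᵀDE(a − b) ≥ ½(a − b)ᵀ(Cᵀ + C)(a − b)`, one has
`‖Ea‖_D² − ‖Eb‖_D² ≥ ‖a − b‖_G² ≥ 0`; in particular `‖Eb‖_D² ≤ ‖Ea‖_D²`. -/
theorem neADMM_nonergodic_monotone {n : ℕ}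
    (D E : Matrix (Fin n) (Fin n) ℝ) (hD : D.IsSymm)
    (C G : Matrix (Fin n) (Fin n) ℝ) (hC : C = D * E) (hG : G = C + Cᵀ - Eᵀ * D * E)
    (hGpsd : G.PosSemidef) (a b : Fin n → ℝ)
    (hkey : (1 / 2) * ((a - b) ⬝ᵥ ((Cᵀ + C) *ᵥ (a - b))) ≤
      a ⬝ᵥ ((Eᵀ * D * E) *ᵥ (a - b))) :
    (a - b) ⬝ᵥ (G *ᵥ (a - b)) ≤
        (E *ᵥ a) ⬝ᵥ (D *ᵥ (E *ᵥ a)) - (E *ᵥ b) ⬝ᵥ (D *ᵥ (E *ᵥ b)) ∧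
    0 ≤ (a - b) ⬝ᵥ (G *ᵥ (a - b)) ∧
    (E *ᵥ b) ⬝ᵥ (D *ᵥ (E *ᵥ b)) ≤ (E *ᵥ a) ⬝ᵥ (D *ᵥ (E *ᵥ a)) :=
  neADMM_nonergodic_monotone_general D E hD C G hG hGpsd a b hkey
end

section
/- Let Ω ⊆ ℝⁿ, let D ∈ ℝ^{n×n} be symmetric, E ∈ ℝ^{n×n}, C = D·E, G = C + Cᵀ − EᵀDE, let H : ℝⁿ → ℝ and J : ℝⁿ → ℝⁿ. Let wᵏ ∈ ℝⁿ, w̃ᵏ ∈ Ω, w* ∈ Ω, and set w^{k+1} = wᵏ − E(wᵏ − w̃ᵏ). Assume (i) H(w*) − H(w̃ᵏ) + ⟨w* − w̃ᵏ, J(w*)⟩ ≥ (w* − w̃ᵏ)ᵀDE(wᵏ − w̃ᵏ), and (ii) H(w̃ᵏ) − H(w*) + ⟨w̃ᵏ − w*, J(w*)⟩ ≥ 0. Then (w^{k+1} − w*)ᵀD(w^{k+1} − w*) ≤ (wᵏ − w*)ᵀD(wᵏ − w*) − (wᵏ − w̃ᵏ)ᵀG(wᵏ − w̃ᵏ). 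-/
open Matrix

private lemma neADMM_aux {n : ℕ} (D E C G : Matrix (Fin n) (Fin n) ℝ) (hD : D.IsSymm)
    (hC : C = D * E) (hG : G = C + Cᵀ - Eᵀ * D * E) (a d : Fin n → ℝ)
    (hkey : 0 ≤ (a - d) ⬝ᵥ (C *ᵥ d)) :
    (a - E *ᵥ d) ⬝ᵥ (D *ᵥ (a - E *ᵥ d)) ≤ a ⬝ᵥ (D *ᵥ a) - d ⬝ᵥ (G *ᵥ d) := by
  have hsym : ∀ x y : Fin n → ℝ, x ⬝ᵥ (D *ᵥ y) = y ⬝ᵥ (D *ᵥ x) := by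
    intro x y
    rw [dotProduct_mulVec, ← Matrix.mulVec_transpose, hD.eq, dotProduct_comm]
  have hCd : ∀ x : Fin n → ℝ, x ⬝ᵥ (C *ᵥ d) = x ⬝ᵥ (D *ᵥ (E *ᵥ d)) := by
    intro x; rw [hC, ← Matrix.mulVec_mulVec]
  have hCt : d ⬝ᵥ (Cᵀ *ᵥ d) = d ⬝ᵥ (C *ᵥ d) := by
    rw [Matrix.mulVec_transpose, dotProduct_comm, ← dotProduct_mulVec]
  have hEDE : d ⬝ᵥ ((Eᵀ * D * E) *ᵥ d) = (E *ᵥ d) ⬝ᵥ (D *ᵥ (E *ᵥ d)) := by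
    rw [← Matrix.mulVec_mulVec, ← Matrix.mulVec_mulVec, Matrix.mulVec_transpose,
      dotProduct_comm, ← dotProduct_mulVec, dotProduct_comm]
  have hL : (a - E *ᵥ d) ⬝ᵥ (D *ᵥ (a - E *ᵥ d)) =
      a ⬝ᵥ (D *ᵥ a) - 2 * (a ⬝ᵥ (C *ᵥ d)) + (E *ᵥ d) ⬝ᵥ (D *ᵥ (E *ᵥ d)) := by
    rw [Matrix.mulVec_sub, dotProduct_sub, sub_dotProduct, sub_dotProduct,
      hsym (E *ᵥ d) a, hCd a]
    ring
  have hR : a ⬝ᵥ (D *ᵥ a) - d ⬝ᵥ (G *ᵥ d) =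
      a ⬝ᵥ (D *ᵥ a) - 2 * (d ⬝ᵥ (C *ᵥ d)) + (E *ᵥ d) ⬝ᵥ (D *ᵥ (E *ᵥ d)) := by
    rw [hG, Matrix.sub_mulVec, Matrix.add_mulVec, dotProduct_sub, dotProduct_add,
      hCt, hEDE]
    ring
  rw [hL, hR]
  have hsplit : (a - d) ⬝ᵥ (C *ᵥ d) = a ⬝ᵥ (C *ᵥ d) - d ⬝ᵥ (C *ᵥ d) := by
    rw [sub_dotProduct]
  linarith [hkey, hsplit]

/-- Contraction inequality toward a VI solution `w*` in the nonergodic rate analysis of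
neADMM: under the per-iteration inequality at `w = w*` and the VI property of `w*`
tested at `w̃ᵏ`, the corrector step `w^{k+1} = wᵏ − E(wᵏ − w̃ᵏ)` satisfies
`‖w^{k+1} − w*‖_D² ≤ ‖wᵏ − w*‖_D² − ‖wᵏ − w̃ᵏ‖_G²`. -/
theorem neADMM_contraction {n : ℕ} (Ω : Set (Fin n → ℝ))
    (D E : Matrix (Fin n) (Fin n) ℝ) (hD : D.IsSymm)
    (C G : Matrix (Fin n) (Fin n) ℝ) (hC : C = D * E) (hG : G = C + Cᵀ - Eᵀ * D * E)
    (H : (Fin n → ℝ) → ℝ) (J : (Fin n → ℝ) → (Fin n → ℝ))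
    (wk wtk ws : Fin n → ℝ) (hwtk : wtk ∈ Ω) (hws : ws ∈ Ω)
    (wk1 : Fin n → ℝ) (hwk1 : wk1 = wk - E *ᵥ (wk - wtk))
    (h1 : (ws - wtk) ⬝ᵥ ((D * E) *ᵥ (wk - wtk)) ≤
      H ws - H wtk + (ws - wtk) ⬝ᵥ J ws)
    (h2 : 0 ≤ H wtk - H ws + (wtk - ws) ⬝ᵥ J ws) :
    (wk1 - ws) ⬝ᵥ (D *ᵥ (wk1 - ws)) ≤
      (wk - ws) ⬝ᵥ (D *ᵥ (wk - ws)) - (wk - wtk) ⬝ᵥ (G *ᵥ (wk - wtk)) := by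
  have hw : wk1 - ws = (wk - ws) - E *ᵥ (wk - wtk) := by rw [hwk1]; abel
  rw [hw]
  apply neADMM_aux D E C G hD hC hG
  have hsub : (wk - ws) - (wk - wtk) = wtk - ws := by abel
  rw [hsub, hC]
  have hneg : (wtk - ws) ⬝ᵥ ((D * E) *ᵥ (wk - wtk)) =
      -((ws - wtk) ⬝ᵥ ((D * E) *ᵥ (wk - wtk))) := by
    rw [← neg_dotProduct]; congr 1; abel
  have hJ : (wtk - ws) ⬝ᵥ J ws = -((ws - wtk) ⬝ᵥ J ws) := by
    rw [← neg_dotProduct]; congr 1; abel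
  rw [hJ] at h2
  linarith
end

section
/- Let D ∈ ℝ^{n×n} be symmetric positive semidefinite, E ∈ ℝ^{n×n}, c₀ > 0, w* ∈ ℝⁿ, and let (wᵏ)_{k≥0}, (w̃ᵏ)_{k≥0} be sequences in ℝⁿ such that for all k ≥ 0: (i) (w^{k+1} − w*)ᵀD(w^{k+1} − w*) ≤ (wᵏ − w*)ᵀD(wᵏ − w*) − c₀·(E(wᵏ − w̃ᵏ))ᵀD(E(wᵏ − w̃ᵏ)), and (ii) (E(w^{k+1} − w̃^{k+1}))ᵀD(E(w^{k+1} − w̃^{k+1})) ≤ (E(wᵏ − w̃ᵏ))ᵀD(E(wᵏ − w̃ᵏ)). Then for every integer t ≥ 0: (E(wᵗ − w̃ᵗ))ᵀD(E(wᵗ − w̃ᵗ)) ≤ (1/((t+1)·c₀))·(w⁰ − w*)ᵀD(w⁰ − w*). -/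
open Matrix Finset

/-!
Summing the contraction inequality telescopes: `c₀ · ∑_{k ≤ t} ‖E(wᵏ − w̃ᵏ)‖_D² ≤ ‖w⁰ − w*‖_D²`,
since `‖w^{t+1} − w*‖_D² ≥ 0`. The summands are nonincreasing, so each of the `t + 1` of them
dominates the last one, which is therefore at most `‖w⁰ − w*‖_D² / ((t + 1) c₀)`.
-/

section Descent

variable {α : Type*} [Field α] [LinearOrder α] [IsStrictOrderedRing α] {a b : ℕ → α}

theorem sum_range_le_sub_of_le_sub (h : ∀ k, b (k + 1) ≤ b k - a k) (n : ℕ) :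
    ∑ k ∈ range n, a k ≤ b 0 - b n := by
  rw [← sum_range_sub']
  exact sum_le_sum fun k _ => by linarith [h k]

theorem succ_mul_le_sum_range_of_antitone (ha : Antitone a) (t : ℕ) :
    ((t : α) + 1) * a t ≤ ∑ k ∈ range (t + 1), a k := by
  have := card_nsmul_le_sum (range (t + 1)) a (a t) fun k hk =>
    ha (Nat.lt_succ_iff.mp (mem_range.mp hk))
  simpa [nsmul_eq_mul] using this

theorem le_div_of_antitone_of_le_sub_mul {c : α} (hc : 0 < c) (hb : ∀ k, 0 ≤ b k)
    (ha : Antitone a) (h : ∀ k, b (k + 1) ≤ b k - c * a k) (t : ℕ) :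
    a t ≤ 1 / (((t : α) + 1) * c) * b 0 := by
  have hsum : c * ∑ k ∈ range (t + 1), a k ≤ b 0 - b (t + 1) := by
    rw [mul_sum]
    exact sum_range_le_sub_of_le_sub h (t + 1)
  have hmul := mul_le_mul_of_nonneg_left (succ_mul_le_sum_range_of_antitone ha t) hc.le
  rw [one_div_mul_eq_div, le_div_iff₀ (by positivity)]
  linarith [hb (t + 1)]

end Descent

/-- Worst-case nonergodic O(1/t) convergence rate of neADMM: under the contraction
inequality toward `w*` (with constant `c₀ > 0`) and the monotone nonincreasing property
of `‖E(wᵏ − w̃ᵏ)‖_D²`, for every `t ≥ 0` one has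
`‖E(wᵗ − w̃ᵗ)‖_D² ≤ ‖w⁰ − w*‖_D²/((t+1)·c₀)`. -/
theorem neADMM_nonergodic_rate {n : ℕ}
    (D : Matrix (Fin n) (Fin n) ℝ) (hD : D.PosSemidef)
    (E : Matrix (Fin n) (Fin n) ℝ) (c₀ : ℝ) (hc₀ : 0 < c₀) (ws : Fin n → ℝ)
    (w wt : ℕ → (Fin n → ℝ))
    (h1 : ∀ k : ℕ, (w (k + 1) - ws) ⬝ᵥ (D *ᵥ (w (k + 1) - ws)) ≤
      (w k - ws) ⬝ᵥ (D *ᵥ (w k - ws)) -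
        c₀ * ((E *ᵥ (w k - wt k)) ⬝ᵥ (D *ᵥ (E *ᵥ (w k - wt k)))))
    (h2 : ∀ k : ℕ,
      (E *ᵥ (w (k + 1) - wt (k + 1))) ⬝ᵥ (D *ᵥ (E *ᵥ (w (k + 1) - wt (k + 1)))) ≤
        (E *ᵥ (w k - wt k)) ⬝ᵥ (D *ᵥ (E *ᵥ (w k - wt k)))) :
    ∀ t : ℕ, (E *ᵥ (w t - wt t)) ⬝ᵥ (D *ᵥ (E *ᵥ (w t - wt t))) ≤
      (1 / (((t : ℝ) + 1) * c₀)) * ((w 0 - ws) ⬝ᵥ (D *ᵥ (w 0 - ws))) :=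
  le_div_of_antitone_of_le_sub_mul hc₀ (fun k => hD.dotProduct_mulVec_nonneg (w k - ws))
    (antitone_nat_of_succ_le h2) h1
end
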